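/- Let A ⊆ B ⊆ G_E with A and B internal and non-empty. Then for each representative net (A_ε) of A there exists a representative net (B_ε) of B such that A_ε ⊆ B_ε for all ε ∈ (0,1). -/

import Mathlib

open Filter Topology Asymptotics

noncomputable section

namespace ColombeauPaper

variable {ι κ : Type*} {E : Type*} [AddCommGroup E] [Module ℝ E]
  {F : Type*} [AddCommGroup F] [Module ℝ F]

/-- A net `(u_ε)` in `E` is moderate for the family of seminorms `p` if for every `i`
there is `M ∈ ℕ` with `p i (u_ε) ≤ ε ^ (-M)` for all sufficiently small `ε > 0`. -/
def IsModerate (p : ι → Seminorm ℝ E) (u : ℝ → E) : Prop :=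
  ∀ i, ∃ M : ℕ, ∀ᶠ ε in 𝓝[>] (0 : ℝ), p i (u ε) ≤ ε ^ (-(M : ℤ))

/-- A net `(u_ε)` in `E` is negligible if for every `i` and every `m ∈ ℕ` one has
`p i (u_ε) ≤ ε ^ m` for all sufficiently small `ε > 0`. -/
def IsNegligible (p : ι → Seminorm ℝ E) (u : ℝ → E) : Prop :=
  ∀ i, ∀ m : ℕ, ∀ᶠ ε in 𝓝[>] (0 : ℝ), p i (u ε) ≤ ε ^ m

/-- A negligible net of real numbers. -/
def IsNegligibleR (n : ℝ → ℝ) : Prop :=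
  ∀ m : ℕ, ∀ᶠ ε in 𝓝[>] (0 : ℝ), |n ε| ≤ ε ^ m

lemma small_mem : {ε : ℝ | 0 < ε ∧ ε ≤ 1 / 2} ∈ 𝓝[>] (0 : ℝ) := by
  have h : Set.Ioo (0 : ℝ) (1 / 2) ∈ 𝓝[>] (0 : ℝ) :=
    Ioo_mem_nhdsGT_of_mem ⟨le_refl 0, by norm_num⟩
  filter_upwards [h] with ε hε
  exact ⟨hε.1, hε.2.le⟩

lemma zpow_neg_natCast_eq {ε : ℝ} (k : ℕ) : ε ^ (-(k : ℤ)) = ε⁻¹ ^ (k : ℤ) := by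
  rw [zpow_neg, inv_zpow]

/-- The moderate nets form an additive subgroup of `(0,1) → E` (here modelled on `ℝ → E`,
with all conditions holding for sufficiently small `ε > 0`). -/
def moderateGroup (p : ι → Seminorm ℝ E) : AddSubgroup (ℝ → E) where
  carrier := {u | IsModerate p u}
  zero_mem' := by
    intro i
    refine ⟨0, ?_⟩
    filter_upwards [self_mem_nhdsWithin] with ε hε
    have hε' : (0 : ℝ) < ε := hε
    simp only [Pi.zero_apply, map_zero]
    positivity
  add_mem' := by
    intro u v hu hv i
    obtain ⟨M, hM⟩ := hu i
    obtain ⟨N, hN⟩ := hv i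
    refine ⟨max M N + 1, ?_⟩
    filter_upwards [hM, hN, small_mem] with ε h1 h2 h3
    obtain ⟨hε, hε2⟩ := h3
    have hinv : (1 : ℝ) ≤ ε⁻¹ := (one_le_inv₀ hε).2 (by linarith)
    have h2inv : (2 : ℝ) ≤ ε⁻¹ := by
      nlinarith [mul_inv_cancel₀ (ne_of_gt hε)]
    have key : ∀ k l : ℕ, k ≤ l → ε ^ (-(k : ℤ)) ≤ ε ^ (-(l : ℤ)) := by
      intro k l hkl
      rw [zpow_neg_natCast_eq, zpow_neg_natCast_eq]
      exact zpow_le_zpow_right₀ hinv (by exact_mod_cast hkl)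
    set K : ℕ := max M N with hK
    have h1' : p i (u ε) ≤ ε ^ (-(K : ℤ)) := h1.trans (key M K (le_max_left _ _))
    have h2' : p i (v ε) ≤ ε ^ (-(K : ℤ)) := h2.trans (key N K (le_max_right _ _))
    have tri : p i ((u + v) ε) ≤ p i (u ε) + p i (v ε) := by
      simpa using map_add_le_add (p i) (u ε) (v ε)
    have efin : ε ^ (-(K : ℤ)) * 2 ≤ ε ^ (-((K + 1 : ℕ) : ℤ)) := by
      rw [zpow_neg_natCast_eq, zpow_neg_natCast_eq]
      push_cast
      have hnn : (0:ℝ) ≤ ε⁻¹ ^ (K : ℤ) := by positivity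
      calc ε⁻¹ ^ (K : ℤ) * 2 ≤ ε⁻¹ ^ (K : ℤ) * ε⁻¹ :=
            mul_le_mul_of_nonneg_left h2inv hnn
        _ = ε⁻¹ ^ ((K : ℤ) + 1) := by rw [zpow_add₀ (by positivity : (ε⁻¹ : ℝ) ≠ 0), zpow_one]
    push_cast at efin ⊢
    linarith
  neg_mem' := by
    intro u hu i
    obtain ⟨M, hM⟩ := hu i
    refine ⟨M, ?_⟩
    filter_upwards [hM] with ε h
    simpa [map_neg_eq_map] using h

/-- The negligible nets form an additive subgroup of the moderate ones. -/
def negligibleGroup (p : ι → Seminorm ℝ E) : AddSubgroup (moderateGroup p) where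
  carrier := {u | IsNegligible p (u : ℝ → E)}
  zero_mem' := by
    intro i m
    filter_upwards [self_mem_nhdsWithin] with ε hε
    have hε' : (0 : ℝ) < ε := hε
    simp only [AddSubgroup.coe_zero, Pi.zero_apply, map_zero]
    positivity
  add_mem' := by
    intro u v hu hv i m
    filter_upwards [hu i (m + 1), hv i (m + 1), small_mem] with ε h1 h2 h3
    obtain ⟨hε, hε2⟩ := h3
    have tri : p i (((u + v : moderateGroup p) : ℝ → E) ε)
        ≤ p i ((u : ℝ → E) ε) + p i ((v : ℝ → E) ε) := by
      simpa using map_add_le_add (p i) ((u : ℝ → E) ε) ((v : ℝ → E) ε)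
    have hpow : ε ^ (m + 1) = ε ^ m * ε := pow_succ ε m
    nlinarith [pow_nonneg hε.le m]
  neg_mem' := by
    intro u hu i m
    filter_upwards [hu i m] with ε h
    have : ((-u : moderateGroup p) : ℝ → E) ε = -((u : ℝ → E) ε) := rfl
    rw [this, map_neg_eq_map]
    exact h

/-- The Colombeau space based on `E` (with the family of seminorms `p`):
the quotient of the moderate nets by the negligible ones. -/
abbrev Colombeau (p : ι → Seminorm ℝ E) : Type _ :=
  moderateGroup p ⧸ negligibleGroup p

/-- The internal subset of `𝒢_E` generated by a net `(A_ε)` of subsets of `E`: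
all `u` having a representative `(u_ε)` with `u_ε ∈ A_ε` for sufficiently small `ε`. -/
def internalSet (p : ι → Seminorm ℝ E) (A : ℝ → Set E) : Set (Colombeau p) :=
  {u | ∃ w : moderateGroup p, (QuotientAddGroup.mk w : Colombeau p) = u ∧
        ∀ᶠ ε in 𝓝[>] (0 : ℝ), (w : ℝ → E) ε ∈ A ε}

/-- A subset of `𝒢_E` is internal if it is generated by some net of subsets of `E`. -/
def IsInternal (p : ι → Seminorm ℝ E) (A : Set (Colombeau p)) : Prop :=
  ∃ Anet : ℝ → Set E, A = internalSet p Anet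

/-- `d_i(u, A) = inf_{v ∈ A} p_i (u - v)`, with value `+∞` for `A = ∅`. -/
def semiDist (p : ι → Seminorm ℝ E) (i : ι) (u : E) (A : Set E) : EReal :=
  ⨅ v ∈ A, ((p i (u - v) : ℝ) : EReal)

/-- A sharply bounded net of subsets of `E`. -/
def SharplyBoundedNet (p : ι → Seminorm ℝ E) (A : ℝ → Set E) : Prop :=
  ∀ i, ∃ M : ℕ, ∀ᶠ ε in 𝓝[>] (0 : ℝ), ∀ w ∈ A ε, p i w ≤ ε ^ (-(M : ℤ))

/-- `p_i(u) ≤ α ^ t` in `ℝ̃` (where `α` is the class of `(ε)_ε`): some representative of the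
net of seminorms is bounded by `ε ^ t` up to a negligible net for small `ε`. -/
def seminormLeAlpha (p : ι → Seminorm ℝ E) (i : ι) (u : Colombeau p) (t : ℝ) : Prop :=
  ∃ (w : moderateGroup p) (n : ℝ → ℝ), (QuotientAddGroup.mk w : Colombeau p) = u ∧
    IsNegligibleR n ∧ ∀ᶠ ε in 𝓝[>] (0 : ℝ), p i ((w : ℝ → E) ε) ≤ ε ^ t + n ε

/-- The ultra-pseudo-seminorm `u ↦ |p_i(u)|_s = e^{-ν(p_i(u))}` on `𝒢_E`, where
`ν(x) = sup {b : |x_ε| = O(ε^b)}` is the valuation. -/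
def sharpSemi (p : ι → Seminorm ℝ E) (i : ι) (u : Colombeau p) : ℝ :=
  sInf {r : ℝ | ∃ (b : ℝ) (w : moderateGroup p), (QuotientAddGroup.mk w : Colombeau p) = u ∧
    r = Real.exp (-b) ∧ (fun ε => (p i ((w : ℝ → E) ε) : ℝ)) =O[𝓝[>] (0 : ℝ)] fun ε => ε ^ b}

/-- The sharp topology on `𝒢_E`: the topology generated by the ultra-pseudo-seminorms
`u ↦ |p_i(u)|_s`, i.e. generated by all the corresponding balls. -/
def sharpTopology (p : ι → Seminorm ℝ E) : TopologicalSpace (Colombeau p) :=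
  TopologicalSpace.generateFrom
    {B | ∃ (u : Colombeau p) (i : ι) (r : ℝ), 0 < r ∧
          B = {v | sharpSemi p i (v - u) < r}}

lemma indicator_norm_le_one (S : Set ℝ) (ε : ℝ) :
    ‖S.indicator (fun _ => (1 : ℝ)) ε‖ ≤ 1 := by
  by_cases h : ε ∈ S <;>
    simp [Set.indicator_of_mem, Set.indicator_of_notMem, h]

lemma eAux_le (p : ι → Seminorm ℝ E) (S : Set ℝ) (i : ι) (ε : ℝ) (x : E) :
    p i (S.indicator (fun _ => (1 : ℝ)) ε • x) ≤ p i x := by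
  rw [map_smul_eq_mul]
  calc ‖S.indicator (fun _ => (1 : ℝ)) ε‖ * p i x ≤ 1 * p i x :=
        mul_le_mul_of_nonneg_right (indicator_norm_le_one S ε) (apply_nonneg _ _)
    _ = p i x := one_mul _

/-- Multiplication by the characteristic function `χ_S`, on representatives. -/
def eAux (p : ι → Seminorm ℝ E) (S : Set ℝ) : moderateGroup p →+ moderateGroup p where
  toFun u := ⟨fun ε => S.indicator (fun _ => (1 : ℝ)) ε • (u : ℝ → E) ε, by
    have hu : IsModerate p (u : ℝ → E) := u.2
    intro i
    obtain ⟨M, hM⟩ := hu i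
    refine ⟨M, ?_⟩
    filter_upwards [hM] with ε hε
    exact (eAux_le p S i ε _).trans hε⟩
  map_zero' := by
    apply Subtype.ext
    funext ε
    simp
  map_add' u v := by
    apply Subtype.ext
    funext ε
    simp [smul_add]

/-- Multiplication by `e_S`, the class of the characteristic function of `S ⊆ (0,1)`,
as a map `𝒢_E → 𝒢_E`. -/
def eMul (p : ι → Seminorm ℝ E) (S : Set ℝ) : Colombeau p →+ Colombeau p :=
  QuotientAddGroup.map _ _ (eAux p S) (by
    intro u hu
    rw [AddSubgroup.mem_comap]
    have hu' : IsNegligible p (u : ℝ → E) := hu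
    show IsNegligible p _
    intro i m
    filter_upwards [hu' i m] with ε hε
    exact (eAux_le p S i ε _).trans hε)

/-- The set of finite interleavings `∑_{j=1}^m e_{S_j} a_j` of elements of `A`,
over partitions `{S_1, …, S_m}` of `(0,1)`. -/
def interleaving (p : ι → Seminorm ℝ E) (A : Set (Colombeau p)) : Set (Colombeau p) :=
  {u | ∃ (m : ℕ) (S : Fin m → Set ℝ) (a : Fin m → Colombeau p),
        (∀ j, a j ∈ A) ∧ (∀ j, S j ⊆ Set.Ioo 0 1) ∧
        (Pairwise fun j k => Disjoint (S j) (S k)) ∧ (⋃ j, S j) = Set.Ioo 0 1 ∧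
        u = ∑ j, eMul p (S j) (a j)}

/-- The family of seminorms `max (p_i, q_j)` generating the product topology on `E × F`. -/
def prodSeminorm (p : ι → Seminorm ℝ E) (q : κ → Seminorm ℝ F) :
    ι × κ → Seminorm ℝ (E × F) :=
  fun ij => (p ij.1).comp (LinearMap.fst ℝ E F) ⊔ (q ij.2).comp (LinearMap.snd ℝ E F)

lemma prodSeminorm_apply (p : ι → Seminorm ℝ E) (q : κ → Seminorm ℝ F) (i : ι) (j : κ)
    (x : E × F) : prodSeminorm p q (i, j) x = max (p i x.1) (q j x.2) := by
  simp [prodSeminorm, Seminorm.sup_apply, Seminorm.comp_apply]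

/-- First component of a moderate net in `E × F`, as a moderate net in `E`. -/
def prodFstAux [Nonempty κ] (p : ι → Seminorm ℝ E) (q : κ → Seminorm ℝ F) :
    moderateGroup (prodSeminorm p q) →+ moderateGroup p where
  toFun w := ⟨fun ε => ((w : ℝ → E × F) ε).1, by
    have hw : IsModerate (prodSeminorm p q) (w : ℝ → E × F) := w.2
    intro i
    obtain ⟨j⟩ := ‹Nonempty κ›
    obtain ⟨M, hM⟩ := hw (i, j)
    refine ⟨M, ?_⟩
    filter_upwards [hM] with ε hε
    calc p i (((w : ℝ → E × F) ε).1) ≤ prodSeminorm p q (i, j) ((w : ℝ → E × F) ε) := by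
          rw [prodSeminorm_apply]; exact le_max_left _ _
      _ ≤ ε ^ (-(M : ℤ)) := hε⟩
  map_zero' := by apply Subtype.ext; funext ε; simp
  map_add' u v := by apply Subtype.ext; funext ε; simp

/-- Second component of a moderate net in `E × F`, as a moderate net in `F`. -/
def prodSndAux [Nonempty ι] (p : ι → Seminorm ℝ E) (q : κ → Seminorm ℝ F) :
    moderateGroup (prodSeminorm p q) →+ moderateGroup q where
  toFun w := ⟨fun ε => ((w : ℝ → E × F) ε).2, by
    have hw : IsModerate (prodSeminorm p q) (w : ℝ → E × F) := w.2
    intro j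
    obtain ⟨i⟩ := ‹Nonempty ι›
    obtain ⟨M, hM⟩ := hw (i, j)
    refine ⟨M, ?_⟩
    filter_upwards [hM] with ε hε
    calc q j (((w : ℝ → E × F) ε).2) ≤ prodSeminorm p q (i, j) ((w : ℝ → E × F) ε) := by
          rw [prodSeminorm_apply]; exact le_max_right _ _
      _ ≤ ε ^ (-(M : ℤ)) := hε⟩
  map_zero' := by apply Subtype.ext; funext ε; simp
  map_add' u v := by apply Subtype.ext; funext ε; simp

/-- The canonical identification `𝒢_{E × F} ≅ 𝒢_E × 𝒢_F` (given on representatives by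
`[(u_ε, v_ε)] ↦ ([(u_ε)], [(v_ε)])`). -/
def prodIdent [Nonempty ι] [Nonempty κ] (p : ι → Seminorm ℝ E) (q : κ → Seminorm ℝ F) :
    Colombeau (prodSeminorm p q) →+ Colombeau p × Colombeau q :=
  QuotientAddGroup.lift (negligibleGroup (prodSeminorm p q))
    (((QuotientAddGroup.mk' (negligibleGroup p)).comp (prodFstAux p q)).prod
      ((QuotientAddGroup.mk' (negligibleGroup q)).comp (prodSndAux p q)))
    (by
      intro w hw
      have hw' : IsNegligible (prodSeminorm p q) (w : ℝ → E × F) := hw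
      rw [AddMonoidHom.mem_ker]
      refine Prod.ext ?_ ?_
      · show (QuotientAddGroup.mk' (negligibleGroup p)) (prodFstAux p q w) = 0
        rw [QuotientAddGroup.mk'_apply, QuotientAddGroup.eq_zero_iff]
        show IsNegligible p _
        intro i m
        obtain ⟨j⟩ := ‹Nonempty κ›
        filter_upwards [hw' (i, j) m] with ε hε
        calc p i (((w : ℝ → E × F) ε).1)
            ≤ prodSeminorm p q (i, j) ((w : ℝ → E × F) ε) := by
              rw [prodSeminorm_apply]; exact le_max_left _ _
          _ ≤ ε ^ m := hε
      · show (QuotientAddGroup.mk' (negligibleGroup q)) (prodSndAux p q w) = 0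
        rw [QuotientAddGroup.mk'_apply, QuotientAddGroup.eq_zero_iff]
        show IsNegligible q _
        intro j m
        obtain ⟨i⟩ := ‹Nonempty ι›
        filter_upwards [hw' (i, j) m] with ε hε
        calc q j (((w : ℝ → E × F) ε).2)
            ≤ prodSeminorm p q (i, j) ((w : ℝ → E × F) ε) := by
              rw [prodSeminorm_apply]; exact le_max_right _ _
          _ ≤ ε ^ m := hε)

/-- A subset of `𝒢_E × 𝒢_F` is internal if, under the canonical identification
`𝒢_{E×F} ≅ 𝒢_E × 𝒢_F`, it corresponds to an internal subset of `𝒢_{E×F}`. -/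
def IsInternalProd [Nonempty ι] [Nonempty κ] (p : ι → Seminorm ℝ E) (q : κ → Seminorm ℝ F)
    (C : Set (Colombeau p × Colombeau q)) : Prop :=
  ∃ Cnet : ℝ → Set (E × F),
    C = prodIdent p q '' internalSet (prodSeminorm p q) Cnet

section Normed

variable (V : Type*) [NormedAddCommGroup V] [NormedSpace ℝ V]

/-- The norm of a normed space, as a one-element family of seminorms. -/
abbrev normFamily : Unit → Seminorm ℝ V := fun _ => normSeminorm ℝ V

/-- The Colombeau space based on a normed space `V`. -/
abbrev GN := Colombeau (normFamily V)

variable {V}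

/-- `‖u‖ ≤ α ^ t` in `ℝ̃`, where `α` is the class of `(ε)_ε`. -/
def normLeAlpha (u : GN V) (t : ℝ) : Prop :=
  ∃ (w : moderateGroup (normFamily V)) (n : ℝ → ℝ),
    (QuotientAddGroup.mk w : GN V) = u ∧ IsNegligibleR n ∧
    ∀ᶠ ε in 𝓝[>] (0 : ℝ), ‖(w : ℝ → V) ε‖ ≤ ε ^ t + n ε

/-- `‖u‖ ≤ ‖v‖` in `ℝ̃`. -/
def normLeNorm (u v : GN V) : Prop :=
  ∃ (a b : moderateGroup (normFamily V)) (n : ℝ → ℝ),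
    (QuotientAddGroup.mk a : GN V) = u ∧ (QuotientAddGroup.mk b : GN V) = v ∧
    IsNegligibleR n ∧
    ∀ᶠ ε in 𝓝[>] (0 : ℝ), ‖(a : ℝ → V) ε‖ ≤ ‖(b : ℝ → V) ε‖ + n ε

/-- A subset `A ⊆ 𝒢_V` is sharply bounded if `‖u‖ ≤ α^{-M}` for some `M ∈ ℕ` and all `u ∈ A`. -/
def SharplyBounded (A : Set (GN V)) : Prop :=
  ∃ M : ℕ, ∀ u ∈ A, normLeAlpha u (-(M : ℝ))

/-- A sharply bounded net of subsets of the normed space `V`. -/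
def SharplyBoundedNetN (A : ℝ → Set V) : Prop :=
  ∃ M : ℕ, ∀ᶠ ε in 𝓝[>] (0 : ℝ), ∀ w ∈ A ε, ‖w‖ ≤ ε ^ (-(M : ℤ))

end Normed

section Piecewise

variable {p : ι → Seminorm ℝ E} (S : Set ℝ) [DecidablePred (· ∈ S)]

lemma IsModerate.piecewise {u v : ℝ → E} (hu : IsModerate p u) (hv : IsModerate p v) :
    IsModerate p (S.piecewise u v) := by
  intro i
  obtain ⟨M, hM⟩ := hu i
  obtain ⟨N, hN⟩ := hv i
  refine ⟨max M N, ?_⟩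
  filter_upwards [hM, hN, Ioc_mem_nhdsGT one_pos] with ε huε hvε ⟨hε₀, hε₁⟩
  have weaken : ∀ k ≤ max M N, ε ^ (-(k : ℤ)) ≤ ε ^ (-((max M N : ℕ) : ℤ)) := fun k hk =>
    zpow_le_zpow_right_of_le_one₀ hε₀ hε₁ (by omega)
  by_cases h : ε ∈ S
  · simpa only [Set.piecewise_eq_of_mem _ _ _ h] using huε.trans (weaken M (le_max_left _ _))
  · simpa only [Set.piecewise_eq_of_notMem _ _ _ h] using
      hvε.trans (weaken N (le_max_right _ _))

lemma IsNegligible.piecewise {u v : ℝ → E} (hu : IsNegligible p u) (hv : IsNegligible p v) :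
    IsNegligible p (S.piecewise u v) := by
  intro i m
  filter_upwards [hu i m, hv i m] with ε huε hvε
  by_cases h : ε ∈ S
  · simpa only [Set.piecewise_eq_of_mem _ _ _ h] using huε
  · simpa only [Set.piecewise_eq_of_notMem _ _ _ h] using hvε

def moderatePiecewise (u v : moderateGroup p) : moderateGroup p :=
  ⟨S.piecewise u v, IsModerate.piecewise S u.2 v.2⟩

@[simp]
lemma coe_moderatePiecewise (u v : moderateGroup p) :
    (moderatePiecewise S u v : ℝ → E) = S.piecewise u v :=
  rfl

lemma mk_moderatePiecewise_congr {u₁ u₂ v₁ v₂ : moderateGroup p}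
    (hu : (QuotientAddGroup.mk u₁ : Colombeau p) = QuotientAddGroup.mk u₂)
    (hv : (QuotientAddGroup.mk v₁ : Colombeau p) = QuotientAddGroup.mk v₂) :
    (QuotientAddGroup.mk (moderatePiecewise S u₁ v₁) : Colombeau p) =
      QuotientAddGroup.mk (moderatePiecewise S u₂ v₂) := by
  rw [QuotientAddGroup.eq] at hu hv ⊢
  have hdiff : ((-moderatePiecewise S u₁ v₁ + moderatePiecewise S u₂ v₂ : moderateGroup p) :
      ℝ → E) = S.piecewise (-u₁ + u₂ : moderateGroup p) (-v₁ + v₂ : moderateGroup p) := by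
    funext ε
    by_cases h : ε ∈ S <;> simp [h]
  show IsNegligible p _
  rw [hdiff]
  exact IsNegligible.piecewise S hu hv

end Piecewise

lemma internalSet_mono {p : ι → Seminorm ℝ E} {A B : ℝ → Set E} (h : ∀ ε, A ε ⊆ B ε) :
    internalSet p A ⊆ internalSet p B := by
  rintro u ⟨w, rfl, hw⟩
  exact ⟨w, rfl, hw.mono fun ε hε => h ε hε⟩

/- If `w ε ∈ B ε ∪ A ε`, glue `w` on `S = {ε | w ε ∈ A ε}` with a point of `[(A_ε)]` off `S`:
the result lies in `[(A_ε)] ⊆ [(B_ε)]`, so it has a representative `v'` in `B_ε`, and gluing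
`v'` on `S` with `w` off `S` gives a representative of `[w]` in `B_ε`. -/
lemma internalSet_union_eq_of_subset {p : ι → Seminorm ℝ E} {A B : ℝ → Set E}
    (hA : (internalSet p A).Nonempty) (hAB : internalSet p A ⊆ internalSet p B) :
    internalSet p (fun ε => B ε ∪ A ε) = internalSet p B := by
  classical
  refine (internalSet_mono fun ε => Set.subset_union_left).antisymm' ?_
  rintro _ ⟨w, rfl, hw⟩
  obtain ⟨_, a, -, ha⟩ := hA
  set S : Set ℝ := {ε | (w : ℝ → E) ε ∈ A ε}
  obtain ⟨v', hv', hv'B⟩ := hAB ⟨moderatePiecewise S w a, rfl, by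
    filter_upwards [ha] with ε haε
    by_cases h : ε ∈ S
    · rw [coe_moderatePiecewise, Set.piecewise_eq_of_mem _ _ _ h]
      exact h
    · rw [coe_moderatePiecewise, Set.piecewise_eq_of_notMem _ _ _ h]
      exact haε⟩
  have hglue : moderatePiecewise S (moderatePiecewise S w a) w = w := by
    ext ε
    by_cases h : ε ∈ S <;> simp [h]
  refine ⟨moderatePiecewise S v' w, ?_, ?_⟩
  · exact (mk_moderatePiecewise_congr S hv' rfl).trans (congrArg _ hglue)
  · filter_upwards [hw, hv'B] with ε hwε hv'ε
    by_cases h : ε ∈ S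
    · rwa [coe_moderatePiecewise, Set.piecewise_eq_of_mem _ _ _ h]
    · rw [coe_moderatePiecewise, Set.piecewise_eq_of_notMem _ _ _ h]
      exact hwε.resolve_right h

theorem exists_nested_representative_general
    {E : Type*} [AddCommGroup E] [Module ℝ E] {ι : Type*}
    (p : ι → Seminorm ℝ E) (Anet : ℝ → Set E) (B : Set (Colombeau p))
    (hB : IsInternal p B) (hAne : (internalSet p Anet).Nonempty)
    (hAB : internalSet p Anet ⊆ B) :
    ∃ Bnet : ℝ → Set E, B = internalSet p Bnet ∧
      ∀ ε ∈ Set.Ioo (0 : ℝ) 1, Anet ε ⊆ Bnet ε := by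
  obtain ⟨B', rfl⟩ := hB
  exact ⟨fun ε => B' ε ∪ Anet ε, (internalSet_union_eq_of_subset hAne hAB).symm,
    fun ε _ => Set.subset_union_right⟩

/-- If `A ⊆ B ⊆ 𝒢_E` are internal and nonempty, then for each
representative net `(A_ε)` of `A` there is a representative net `(B_ε)` of `B` with
`A_ε ⊆ B_ε` for all `ε ∈ (0,1)`. -/
theorem exists_nested_representative
    {E : Type*} [AddCommGroup E] [Module ℝ E] {ι : Type*}
    (p : ι → Seminorm ℝ E) (Anet : ℝ → Set E) (B : Set (Colombeau p))
    (hB : IsInternal p B) (hAne : (internalSet p Anet).Nonempty) (hBne : B.Nonempty)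
    (hAB : internalSet p Anet ⊆ B) :
    ∃ Bnet : ℝ → Set E, B = internalSet p Bnet ∧
      ∀ ε ∈ Set.Ioo (0 : ℝ) 1, Anet ε ⊆ Bnet ε :=
  exists_nested_representative_general p Anet B hB hAne hAB

end ColombeauPaper
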